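/- Let κ(N) denote the number of eigenvalues (with multiplicity) of the Hermitian matrix e_N lying in [1/2, ∞). Then lim_{N→∞} ( κ(N) − ( 3·tr(e_N²) − 2·tr(e_N³) ) ) = 0. -/

import Mathlib

/-!
For a Hermitian matrix with eigenvalues `λᵢ`, the cubic `3x² - 2x³` differs from the indicator
of `[1/2, ∞)` by at most `16 (x² - x)²`, so `κ - tr (3e² - 2e³)` is bounded by
`16 ‖e² - e‖²` in the Frobenius norm. For the Loring matrix the relations `f² + g² + h² = f` and
`gh = 0` reduce the blocks of `e² - e` to diagonal matrices, possibly times the shift `v`, whose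
entries are differences of `f` or `h` at adjacent `N`-th roots of unity, hence `O(1/N)` by the
Lipschitz hypotheses. With `N` such entries per block, `‖e² - e‖² = O(1/N)`.
-/

open Complex Real Filter

/-- The cyclic shift Voiculescu unitary `v_N`, with `v_N δ_k = δ_{k+1 mod N}`. -/
def voicV (N : ℕ) : Matrix (Fin N) (Fin N) ℂ :=
  Matrix.of fun i j => if (i : ℕ) = ((j : ℕ) + 1) % N then 1 else 0

/-- `f(u_N)`: the diagonal matrix `diag (f (e^{2πik/N}))_{k=0}^{N-1}`. -/
noncomputable def diagF (f : ℂ → ℝ) (N : ℕ) : Matrix (Fin N) (Fin N) ℂ :=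
  Matrix.diagonal fun k => (f (Complex.exp (2 * Real.pi * Complex.I * k / N)) : ℂ)

/-- The Loring matrix `e_N` associated to the Voiculescu matrices `u_N, v_N`. -/
noncomputable def loringMatrix (f g h : ℂ → ℝ) (N : ℕ) :
    Matrix (Fin N ⊕ Fin N) (Fin N ⊕ Fin N) ℂ :=
  Matrix.fromBlocks
    (diagF f N) (diagF g N + diagF h N * voicV N)
    ((voicV N).conjTranspose * diagF h N + diagF g N) (1 - diagF f N)

open Matrix
open scoped NNReal

attribute [local instance] Matrix.frobeniusNormedAddCommGroup

section Frobenius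

variable {𝕜 : Type*} [RCLike 𝕜] {m n : Type*} [Fintype m] [Fintype n]

lemma Matrix.frobenius_norm_sq (A : Matrix m n 𝕜) : ‖A‖ ^ 2 = ∑ i, ∑ j, ‖A i j‖ ^ 2 := by
  rw [frobenius_norm_def, ← Real.sqrt_eq_rpow, Real.sq_sqrt (by positivity)]
  norm_cast

lemma Matrix.frobenius_norm_sq_eq_re_trace (A : Matrix m n 𝕜) :
    ‖A‖ ^ 2 = RCLike.re (Aᴴ * A).trace := by
  rw [frobenius_norm_sq, trace, Finset.sum_comm, ← RCLike.ofReal_re (K := 𝕜) (∑ i, ∑ j, _)]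
  simp only [diag_apply, Matrix.mul_apply, conjTranspose_apply, RCLike.star_def, RCLike.conj_mul]
  push_cast
  rfl

lemma Matrix.frobenius_norm_mul_unitary [DecidableEq n] (A : Matrix m n 𝕜) {U : Matrix n n 𝕜}
    (hU : U ∈ unitaryGroup n 𝕜) : ‖A * U‖ = ‖A‖ := by
  rw [← sq_eq_sq₀ (norm_nonneg _) (norm_nonneg _), frobenius_norm_sq_eq_re_trace,
    frobenius_norm_sq_eq_re_trace, conjTranspose_mul, Matrix.mul_assoc, trace_mul_comm,
    Matrix.mul_assoc, Matrix.mul_assoc, ← star_eq_conjTranspose, mem_unitaryGroup_iff.mp hU,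
    Matrix.mul_one]

lemma Matrix.frobenius_norm_sq_fromBlocks {l o : Type*} [Fintype l] [Fintype o]
    (A : Matrix n l 𝕜) (B : Matrix n o 𝕜) (C : Matrix m l 𝕜) (D : Matrix m o 𝕜) :
    ‖fromBlocks A B C D‖ ^ 2 = ‖A‖ ^ 2 + ‖B‖ ^ 2 + ‖C‖ ^ 2 + ‖D‖ ^ 2 := by
  simp only [frobenius_norm_sq, Fintype.sum_sum_type, fromBlocks_apply₁₁, fromBlocks_apply₁₂,
    fromBlocks_apply₂₁, fromBlocks_apply₂₂, Finset.sum_add_distrib]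
  ring

lemma Matrix.frobenius_norm_sq_diagonal_le [DecidableEq n] (d : n → 𝕜) {c : ℝ}
    (hd : ∀ k, ‖d k‖ ≤ c) : ‖diagonal d‖ ^ 2 ≤ Fintype.card n * c ^ 2 := by
  rw [frobenius_norm_diagonal, EuclideanSpace.norm_eq, Real.sq_sqrt (by positivity)]
  calc ∑ k, ‖d k‖ ^ 2 ≤ ∑ _k : n, c ^ 2 := by
        gcongr with k; exact hd k
    _ = _ := by simp

end Frobenius

section Spectral

variable {𝕜 : Type*} [RCLike 𝕜] {n : Type*} [Fintype n] [DecidableEq n] {A : Matrix n n 𝕜}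

lemma Matrix.IsHermitian.trace_pow (hA : A.IsHermitian) (k : ℕ) :
    (A ^ k).trace = ∑ i, (hA.eigenvalues i : 𝕜) ^ k := by
  conv_lhs => rw [hA.spectral_theorem, ← map_pow, Unitary.conjStarAlgAut_apply,
    trace_mul_cycle, Unitary.coe_star_mul_self, one_mul, diagonal_pow, trace_diagonal]
  simp

lemma Matrix.IsHermitian.frobenius_norm_sq_sq_sub_self (hA : A.IsHermitian) :
    ‖A ^ 2 - A‖ ^ 2 = ∑ i, (hA.eigenvalues i ^ 2 - hA.eigenvalues i) ^ 2 := by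
  have hsq : (A ^ 2 - A)ᴴ * (A ^ 2 - A) = A ^ 4 - A ^ 3 - A ^ 3 + A ^ 2 := by
    rw [((hA.pow 2).sub hA).eq]; noncomm_ring
  rw [frobenius_norm_sq_eq_re_trace, hsq, trace_add, trace_sub, trace_sub, hA.trace_pow,
    hA.trace_pow, hA.trace_pow, ← Finset.sum_sub_distrib, ← Finset.sum_sub_distrib,
    ← Finset.sum_add_distrib, map_sum]
  refine Finset.sum_congr rfl fun i _ => ?_
  simp only [← RCLike.ofReal_pow, ← RCLike.ofReal_sub, ← RCLike.ofReal_add, RCLike.ofReal_re]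
  ring

lemma abs_indicator_sub_cubic_le (x : ℝ) :
    |(if 1 / 2 ≤ x then 1 else 0) - (3 * x ^ 2 - 2 * x ^ 3)| ≤ 16 * (x ^ 2 - x) ^ 2 := by
  rw [abs_le]
  split_ifs
  all_goals constructor <;> nlinarith [sq_nonneg (x - 1), sq_nonneg x, sq_nonneg (x * (x - 1))]

lemma Matrix.IsHermitian.norm_card_sub_trace_le (hA : A.IsHermitian) :
    ‖((Finset.univ.filter fun i => (1 / 2 : ℝ) ≤ hA.eigenvalues i).card : 𝕜) -
        (3 * (A ^ 2).trace - 2 * (A ^ 3).trace)‖ ≤ 16 * ‖A ^ 2 - A‖ ^ 2 := by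
  have hsum : ((Finset.univ.filter fun i => (1 / 2 : ℝ) ≤ hA.eigenvalues i).card : 𝕜) -
        (3 * (A ^ 2).trace - 2 * (A ^ 3).trace)
      = ((∑ i, ((if 1 / 2 ≤ hA.eigenvalues i then 1 else 0) -
          (3 * hA.eigenvalues i ^ 2 - 2 * hA.eigenvalues i ^ 3)) : ℝ) : 𝕜) := by
    rw [hA.trace_pow, hA.trace_pow, Finset.sum_sub_distrib, Finset.sum_boole]
    push_cast [Finset.mul_sum, Finset.sum_sub_distrib]
    ring
  rw [hsum, RCLike.norm_ofReal, hA.frobenius_norm_sq_sq_sub_self, Finset.mul_sum]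
  exact (Finset.abs_sum_le_sum_abs _ _).trans
    (Finset.sum_le_sum fun i _ => abs_indicator_sub_cubic_le _)

end Spectral

lemma Matrix.fromBlocks_sq_sub_self {n R : Type*} [Fintype n] [DecidableEq n] [Ring R]
    (F G H V W : Matrix n n R) (hVW : V * W = 1) (hFG : F * G = G * F)
    (hGH : G * H = 0) (hHG : H * G = 0) (hsum : F * F + G * G + H * H = F) :
    fromBlocks F (G + H * V) (W * H + G) (1 - F) ^ 2 - fromBlocks F (G + H * V) (W * H + G) (1 - F)
      = fromBlocks (G * W * H + H * V * G) (F * (H * V) - H * V * F)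
          (W * H * F - F * (W * H)) (W * (H * H) * V - H * H) := by
  rw [sq, fromBlocks_multiply, sub_eq_add_neg, fromBlocks_neg, fromBlocks_add]
  congr 1
  · calc _ = G * W * H + H * V * G + (F * F + G * G + H * (V * W) * H - F) := by noncomm_ring
      _ = _ := by rw [hVW, Matrix.mul_one, hsum, sub_self, add_zero]
  · calc _ = F * (H * V) - H * V * F + (F * G - G * F) := by noncomm_ring
      _ = _ := by rw [hFG, sub_self, add_zero]
  · calc _ = W * H * F - F * (W * H) + (G * F - F * G) := by noncomm_ring
      _ = _ := by rw [hFG, sub_self, add_zero]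
  · calc _ = W * (H * H) * V - H * H + (W * (H * G) + G * H * V) + (F * F + G * G + H * H - F) := by
          noncomm_ring
      _ = _ := by rw [hGH, hHG, hsum]; simp

lemma frobenius_norm_sq_diagonal_le_div {N : ℕ} {d : Fin N → ℂ} {c : ℝ}
    (hd : ∀ k, ‖d k‖ ≤ c / N) : ‖diagonal d‖ ^ 2 ≤ c ^ 2 / N := by
  refine (frobenius_norm_sq_diagonal_le _ hd).trans_eq ?_
  rw [Fintype.card_fin]
  field_simp

section Voiculescu

variable {N : ℕ} [NeZero N]

lemma voicV_apply (i j : Fin N) : voicV N i j = if i = j + 1 then 1 else 0 := by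
  simp [voicV, Fin.ext_iff, Fin.val_add, Nat.add_mod_mod]

lemma voicV_mul_diagonal (d : Fin N → ℂ) :
    voicV N * diagonal d = diagonal (fun k => d (k - 1)) * voicV N := by
  ext i j
  simp only [mul_diagonal, diagonal_mul, voicV_apply]
  split_ifs with h <;> simp [h]

lemma voicV_mul_conjTranspose : voicV N * (voicV N)ᴴ = 1 := by
  ext i j
  have hshift : ∀ k : Fin N, j = k + 1 ↔ k = j - 1 := fun k => by
    rw [eq_sub_iff_add_eq, eq_comm]
  simp [Matrix.mul_apply, voicV_apply, Matrix.one_apply, hshift]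

lemma voicV_mem_unitaryGroup : voicV N ∈ unitaryGroup (Fin N) ℂ :=
  mem_unitaryGroup_iff.mpr voicV_mul_conjTranspose

lemma conjTranspose_voicV_mul_diagonal_mul_voicV (d : Fin N → ℂ) :
    (voicV N)ᴴ * diagonal d * voicV N = diagonal (fun k => d (k + 1)) := by
  have h := voicV_mul_diagonal (fun k => d (k + 1))
  simp only [sub_add_cancel] at h
  rw [Matrix.mul_assoc, ← h, ← Matrix.mul_assoc, ← star_eq_conjTranspose,
    mem_unitaryGroup_iff'.mp voicV_mem_unitaryGroup, Matrix.one_mul]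

end Voiculescu

noncomputable def circleSample (f : ℂ → ℝ) (N : ℕ) (k : Fin N) : ℝ :=
  f (Complex.exp (2 * Real.pi * Complex.I * k / N))

lemma diagF_eq_diagonal_circleSample (f : ℂ → ℝ) (N : ℕ) :
    diagF f N = diagonal fun k => (circleSample f N k : ℂ) := rfl

lemma norm_exp_two_pi_I_mul_div (m N : ℕ) : ‖exp (2 * π * I * m / N)‖ = 1 := by
  rw [show 2 * π * I * m / N = ((2 * π * m / N : ℝ) : ℂ) * I by push_cast; ring,
    norm_exp_ofReal_mul_I]

lemma exp_two_pi_I_mul_mod_div (m N : ℕ) :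
    exp (2 * π * I * (m % N : ℕ) / N) = exp (2 * π * I * m / N) := by
  rcases eq_or_ne N 0 with rfl | hN
  · simp
  conv_rhs => rw [← Nat.mod_add_div m N]
  rw [show 2 * π * I * ((m % N + N * (m / N) : ℕ) : ℂ) / N
      = 2 * π * I * (m % N : ℕ) / N + (m / N : ℕ) * (2 * π * I) by push_cast; field_simp,
    Complex.exp_add, exp_nat_mul_two_pi_mul_I, mul_one]

lemma abs_circleSample_add_one_sub_le {f : ℂ → ℝ} {K : ℝ≥0}
    (hf : LipschitzOnWith K (fun x : ℝ => f (exp (2 * π * I * x))) (Set.Icc 0 1))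
    {N : ℕ} [NeZero N] (k : Fin N) :
    |circleSample f N (k + 1) - circleSample f N k| ≤ K / N := by
  have hN : (0 : ℝ) < N := by exact_mod_cast NeZero.pos N
  have hsucc : circleSample f N (k + 1) = f (exp (2 * π * I * (((k + 1 : ℕ) / N : ℝ) : ℂ))) := by
    have hval : ((k + 1 : Fin N) : ℕ) = ((k : ℕ) + 1) % N := by
      simp [Fin.val_add, Nat.add_mod_mod]
    rw [circleSample, hval, exp_two_pi_I_mul_mod_div]
    push_cast; ring_nf
  have hk : circleSample f N k = f (exp (2 * π * I * (((k : ℕ) / N : ℝ) : ℂ))) := by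
    rw [circleSample]; push_cast; ring_nf
  have hmem : ∀ m : ℕ, m ≤ N → (m / N : ℝ) ∈ Set.Icc (0 : ℝ) 1 := fun m hm =>
    ⟨by positivity, div_le_one_of_le₀ (by exact_mod_cast hm) hN.le⟩
  rw [hsucc, hk, ← Real.dist_eq]
  refine (hf.dist_le_mul _ (hmem _ k.isLt) _ (hmem _ k.isLt.le)).trans_eq ?_
  rw [Real.dist_eq, ← sub_div, Nat.cast_add_one, add_sub_cancel_left, abs_of_pos (by positivity)]
  ring

lemma abs_le_one_of_sq_add_sq_add_sq_eq {a b c : ℝ} (h : a ^ 2 + b ^ 2 + c ^ 2 = a) :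
    |b| ≤ 1 ∧ |c| ≤ 1 := by
  constructor <;> rw [abs_le] <;> constructor <;>
    nlinarith [sq_nonneg (a - 1 / 2), sq_nonneg b, sq_nonneg c]

lemma Matrix.conjTranspose_diagonal_ofReal {n : Type*} [DecidableEq n] (d : n → ℝ) :
    (diagonal fun k => (d k : ℂ))ᴴ = diagonal fun k => (d k : ℂ) := by
  simp [diagonal_conjTranspose, Pi.star_def]

section LoringBlocks

variable {N : ℕ} {F G H : Fin N → ℝ}

local notation "𝔇[" d "]" => diagonal fun k => ((d k : ℝ) : ℂ)

lemma loringBlock₁₁_norm_sq_le [NeZero N] {Kh : ℝ} (hG : ∀ k, |G k| ≤ 1)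
    (hGH : ∀ k, G k * H k = 0) (hH : ∀ k : Fin N, |H (k + 1) - H k| ≤ Kh / N) :
    ‖𝔇[G] * (voicV N)ᴴ * 𝔇[H] + 𝔇[H] * voicV N * 𝔇[G]‖ ^ 2 ≤ 4 * Kh ^ 2 / N := by
  have hX : 𝔇[H] * voicV N * 𝔇[G] = diagonal (fun k => (H k * G (k - 1) : ℂ)) * voicV N := by
    rw [Matrix.mul_assoc, voicV_mul_diagonal, ← Matrix.mul_assoc, diagonal_mul_diagonal]
  have hXstar : 𝔇[G] * (voicV N)ᴴ * 𝔇[H] = (𝔇[H] * voicV N * 𝔇[G])ᴴ := by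
    rw [conjTranspose_mul, conjTranspose_mul, conjTranspose_diagonal_ofReal,
      conjTranspose_diagonal_ofReal, Matrix.mul_assoc]
  have hentry : ∀ k, ‖(H k * G (k - 1) : ℂ)‖ ≤ Kh / N := fun k => by
    have hdiff : H k * G (k - 1) = (H k - H (k - 1)) * G (k - 1) := by
      rw [sub_mul, mul_comm (H (k - 1)), hGH, sub_zero]
    calc ‖(H k * G (k - 1) : ℂ)‖ = |G (k - 1)| * |H k - H (k - 1)| := by
          rw [← ofReal_mul, norm_real, Real.norm_eq_abs, hdiff, abs_mul, mul_comm]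
      _ ≤ 1 * (Kh / N) :=
          mul_le_mul (hG _) (by simpa using hH (k - 1)) (abs_nonneg _) zero_le_one
      _ = Kh / N := one_mul _
  calc _ ≤ (2 * ‖𝔇[H] * voicV N * 𝔇[G]‖) ^ 2 := by
        gcongr
        rw [hXstar, two_mul]
        exact (norm_add_le _ _).trans_eq (by rw [frobenius_norm_conjTranspose])
    _ ≤ 4 * Kh ^ 2 / N := by
        rw [hX, frobenius_norm_mul_unitary _ voicV_mem_unitaryGroup, mul_pow]
        exact (mul_le_mul_of_nonneg_left (frobenius_norm_sq_diagonal_le_div hentry)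
          (by norm_num)).trans_eq (by ring)

lemma loringBlock₁₂_norm_sq_le [NeZero N] {Kf : ℝ} (hH : ∀ k, |H k| ≤ 1)
    (hF : ∀ k : Fin N, |F (k + 1) - F k| ≤ Kf / N) :
    ‖𝔇[F] * (𝔇[H] * voicV N) - 𝔇[H] * voicV N * 𝔇[F]‖ ^ 2 ≤ Kf ^ 2 / N := by
  have hY : 𝔇[F] * (𝔇[H] * voicV N) - 𝔇[H] * voicV N * 𝔇[F]
      = diagonal (fun k => (H k * (F k - F (k - 1)) : ℂ)) * voicV N := by
    rw [Matrix.mul_assoc 𝔇[H], voicV_mul_diagonal, ← Matrix.mul_assoc, ← Matrix.mul_assoc,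
      diagonal_mul_diagonal, diagonal_mul_diagonal, ← Matrix.sub_mul, diagonal_sub]
    congr 2; ext k; ring
  have hentry : ∀ k, ‖(H k * (F k - F (k - 1)) : ℂ)‖ ≤ Kf / N := fun k => by
    calc ‖(H k * (F k - F (k - 1)) : ℂ)‖ = |H k| * |F k - F (k - 1)| := by
          rw [← ofReal_sub, ← ofReal_mul, norm_real, Real.norm_eq_abs, abs_mul]
      _ ≤ 1 * (Kf / N) :=
          mul_le_mul (hH _) (by simpa using hF (k - 1)) (abs_nonneg _) zero_le_one
      _ = Kf / N := one_mul _
  rw [hY, frobenius_norm_mul_unitary _ voicV_mem_unitaryGroup]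
  exact frobenius_norm_sq_diagonal_le_div hentry

lemma loringBlock₂₁_eq_conjTranspose :
    (voicV N)ᴴ * 𝔇[H] * 𝔇[F] - 𝔇[F] * ((voicV N)ᴴ * 𝔇[H])
      = (𝔇[F] * (𝔇[H] * voicV N) - 𝔇[H] * voicV N * 𝔇[F])ᴴ := by
  rw [conjTranspose_sub, conjTranspose_mul, conjTranspose_mul, conjTranspose_mul,
    conjTranspose_mul, conjTranspose_diagonal_ofReal, conjTranspose_diagonal_ofReal,
    Matrix.mul_assoc]

lemma loringBlock₂₂_norm_sq_le [NeZero N] {Kh : ℝ} (hH1 : ∀ k, |H k| ≤ 1)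
    (hH : ∀ k : Fin N, |H (k + 1) - H k| ≤ Kh / N) :
    ‖(voicV N)ᴴ * (𝔇[H] * 𝔇[H]) * voicV N - 𝔇[H] * 𝔇[H]‖ ^ 2 ≤ 4 * Kh ^ 2 / N := by
  have hZ : (voicV N)ᴴ * (𝔇[H] * 𝔇[H]) * voicV N - 𝔇[H] * 𝔇[H]
      = diagonal (fun k => ((H (k + 1) - H k) * (H (k + 1) + H k) : ℂ)) := by
    rw [diagonal_mul_diagonal, conjTranspose_voicV_mul_diagonal_mul_voicV, diagonal_sub]
    congr 1; ext k; ring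
  have hentry : ∀ k, ‖((H (k + 1) - H k) * (H (k + 1) + H k) : ℂ)‖ ≤ 2 * Kh / N := fun k => by
    calc ‖((H (k + 1) - H k) * (H (k + 1) + H k) : ℂ)‖
        = |H (k + 1) + H k| * |H (k + 1) - H k| := by
          rw [← ofReal_sub, ← ofReal_add, ← ofReal_mul, norm_real, Real.norm_eq_abs, abs_mul,
            mul_comm]
      _ ≤ 2 * (Kh / N) :=
          mul_le_mul ((abs_add_le _ _).trans (by linarith [hH1 (k + 1), hH1 k])) (hH k)
            (abs_nonneg _) zero_le_two
      _ = 2 * Kh / N := by ring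
  rw [hZ]
  exact (frobenius_norm_sq_diagonal_le_div hentry).trans_eq (by ring)

end LoringBlocks

lemma frobenius_norm_sq_loringMatrix_sq_sub_le {N : ℕ} [NeZero N] {f g h : ℂ → ℝ} {Kf Kh : ℝ}
    (hsum : ∀ k, circleSample f N k ^ 2 + circleSample g N k ^ 2 + circleSample h N k ^ 2
      = circleSample f N k)
    (hgh : ∀ k, circleSample g N k * circleSample h N k = 0)
    (hf : ∀ k : Fin N, |circleSample f N (k + 1) - circleSample f N k| ≤ Kf / N)
    (hh : ∀ k : Fin N, |circleSample h N (k + 1) - circleSample h N k| ≤ Kh / N) :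
    ‖loringMatrix f g h N ^ 2 - loringMatrix f g h N‖ ^ 2 ≤ (2 * Kf ^ 2 + 8 * Kh ^ 2) / N := by
  set F := circleSample f N
  set G := circleSample g N
  set H := circleSample h N
  have hG1 : ∀ k, |G k| ≤ 1 := fun k => (abs_le_one_of_sq_add_sq_add_sq_eq (hsum k)).1
  have hH1 : ∀ k, |H k| ≤ 1 := fun k => (abs_le_one_of_sq_add_sq_add_sq_eq (hsum k)).2
  have hGH : (diagonal fun k => (G k : ℂ)) * diagonal (fun k => (H k : ℂ)) = 0 := by
    rw [diagonal_mul_diagonal, ← diagonal_zero]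
    congr 1; ext k; exact_mod_cast hgh k
  have hsumD : (diagonal fun k => (F k : ℂ)) * diagonal (fun k => (F k : ℂ))
      + (diagonal fun k => (G k : ℂ)) * diagonal (fun k => (G k : ℂ))
      + (diagonal fun k => (H k : ℂ)) * diagonal (fun k => (H k : ℂ))
      = diagonal fun k => (F k : ℂ) := by
    simp only [diagonal_mul_diagonal, diagonal_add]
    congr 1; ext k; exact_mod_cast (by linear_combination hsum k :
      F k * F k + G k * G k + H k * H k = F k)
  rw [loringMatrix, diagF_eq_diagonal_circleSample, diagF_eq_diagonal_circleSample,
    diagF_eq_diagonal_circleSample, fromBlocks_sq_sub_self _ _ _ _ _ voicV_mul_conjTranspose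
      (commute_diagonal _ _).eq hGH ((commute_diagonal _ _).eq.trans hGH) hsumD,
    frobenius_norm_sq_fromBlocks, loringBlock₂₁_eq_conjTranspose, frobenius_norm_conjTranspose]
  exact (add_le_add (add_le_add (add_le_add (loringBlock₁₁_norm_sq_le hG1 hgh hh)
    (loringBlock₁₂_norm_sq_le hH1 hf)) (loringBlock₁₂_norm_sq_le hH1 hf))
    (loringBlock₂₂_norm_sq_le hH1 hh)).trans_eq (by ring)

theorem loring_matrix_eigenvalue_count_vs_traces_general
    (f g h : ℂ → ℝ)
    (hsum : ∀ z : ℂ, ‖z‖ = 1 → (f z) ^ 2 + (g z) ^ 2 + (h z) ^ 2 = f z)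
    (hgh : ∀ z : ℂ, ‖z‖ = 1 → g z * h z = 0)
    (hfLip : ∃ K : NNReal,
      LipschitzOnWith K (fun x : ℝ => f (Complex.exp (2 * Real.pi * Complex.I * x)))
        (Set.Icc (0 : ℝ) 1))
    (hhLip : ∃ K : NNReal,
      LipschitzOnWith K (fun x : ℝ => h (Complex.exp (2 * Real.pi * Complex.I * x)))
        (Set.Icc (0 : ℝ) 1))
    (herm : ∀ N : ℕ, (loringMatrix f g h N).IsHermitian) :
    Tendsto (fun N : ℕ =>
        (((Finset.univ.filter
            fun i => (1 / 2 : ℝ) ≤ (herm N).eigenvalues i).card : ℂ) -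
          (3 * Matrix.trace (loringMatrix f g h N ^ 2) -
            2 * Matrix.trace (loringMatrix f g h N ^ 3))))
      atTop (nhds 0) := by
  obtain ⟨Kf, hKf⟩ := hfLip
  obtain ⟨Kh, hKh⟩ := hhLip
  refine squeeze_zero_norm' ?_
    (tendsto_const_div_atTop_nhds_zero_nat (16 * (2 * (Kf : ℝ) ^ 2 + 8 * (Kh : ℝ) ^ 2)))
  filter_upwards [eventually_ge_atTop 1] with N hN
  have : NeZero N := ⟨by omega⟩
  have hroot : ∀ k : Fin N, ‖exp (2 * π * I * k / N)‖ = 1 := fun k =>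
    norm_exp_two_pi_I_mul_div k N
  calc _ ≤ 16 * ‖loringMatrix f g h N ^ 2 - loringMatrix f g h N‖ ^ 2 :=
        (herm N).norm_card_sub_trace_le
    _ ≤ 16 * ((2 * (Kf : ℝ) ^ 2 + 8 * (Kh : ℝ) ^ 2) / N) := by
        gcongr
        exact frobenius_norm_sq_loringMatrix_sq_sub_le (fun k => hsum _ (hroot k))
          (fun k => hgh _ (hroot k)) (abs_circleSample_add_one_sub_le hKf)
          (abs_circleSample_add_one_sub_le hKh)
    _ = _ := by ring

/-- If `κ(N)` is the number of eigenvalues (with multiplicity) of the Hermitian matrix `e_N`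
in `[1/2, ∞)`, then `κ(N) - (3 tr(e_N²) - 2 tr(e_N³)) → 0` as `N → ∞`. -/
theorem loring_matrix_eigenvalue_count_vs_traces
    (f g h : ℂ → ℝ)
    (hf : ContinuousOn f (Metric.sphere (0 : ℂ) 1))
    (hg : ContinuousOn g (Metric.sphere (0 : ℂ) 1))
    (hh : ContinuousOn h (Metric.sphere (0 : ℂ) 1))
    (hrange : ∀ z : ℂ, ‖z‖ = 1 →
      f z ∈ Set.Icc (0 : ℝ) 1 ∧ g z ∈ Set.Icc (0 : ℝ) 1 ∧ h z ∈ Set.Icc (0 : ℝ) 1)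
    (hsum : ∀ z : ℂ, ‖z‖ = 1 → (f z) ^ 2 + (g z) ^ 2 + (h z) ^ 2 = f z)
    (hgh : ∀ z : ℂ, ‖z‖ = 1 → g z * h z = 0)
    (hf1 : f 1 = 1) (hg1 : g 1 = 0) (hh1 : h 1 = 0)
    (hfLip : ∃ K : NNReal,
      LipschitzOnWith K (fun x : ℝ => f (Complex.exp (2 * Real.pi * Complex.I * x)))
        (Set.Icc (0 : ℝ) 1))
    (hgLip : ∃ K : NNReal,
      LipschitzOnWith K (fun x : ℝ => g (Complex.exp (2 * Real.pi * Complex.I * x)))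
        (Set.Icc (0 : ℝ) 1))
    (hhLip : ∃ K : NNReal,
      LipschitzOnWith K (fun x : ℝ => h (Complex.exp (2 * Real.pi * Complex.I * x)))
        (Set.Icc (0 : ℝ) 1))
    (herm : ∀ N : ℕ, (loringMatrix f g h N).IsHermitian) :
    Tendsto (fun N : ℕ =>
        (((Finset.univ.filter
            fun i => (1 / 2 : ℝ) ≤ (herm N).eigenvalues i).card : ℂ) -
          (3 * Matrix.trace (loringMatrix f g h N ^ 2) -
            2 * Matrix.trace (loringMatrix f g h N ^ 3))))
      atTop (nhds 0) :=
  loring_matrix_eigenvalue_count_vs_traces_general f g h hsum hgh hfLip hhLip herm
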